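/- arXiv:2209.00499 — 9 statements merged into one kernel-verified Lean document; each statement's English description precedes it below -/
import Mathlib

section
/- Let U = {c^1,…,c^N} ⊆ ℝ^n be a finite set of nonnegative scenario vectors, let t ≥ 0, and let ĉ ∈ conv(U) satisfy c^i ≤ t·ĉ componentwise for all i ∈ [N]. If x̂ ∈ X minimizes ĉᵀx over X, then for every x ∈ X it holds that max_{c ∈ U} cᵀx̂ ≤ t · max_{c ∈ U} cᵀx; that is, any optimizer with respect to the single scenario ĉ is a t-approximation for the one-stage robust optimization problem with respect to U. -/
open Finset Matrix

theorem ConvexOn.le_sup'_of_mem_convexHull_range {𝕜 E β ι : Type*} [Field 𝕜] [LinearOrder 𝕜]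
    [IsStrictOrderedRing 𝕜] [AddCommGroup E] [Module 𝕜 E] [AddCommGroup β] [LinearOrder β]
    [IsOrderedAddMonoid β] [Module 𝕜 β] [IsStrictOrderedModule 𝕜 β] [Fintype ι] [Nonempty ι]
    {f : E → β} (hf : ConvexOn 𝕜 Set.univ f) (c : ι → E) {v : E}
    (hv : v ∈ convexHull 𝕜 (Set.range c)) :
    f v ≤ univ.sup' univ_nonempty (f ∘ c) := by
  obtain ⟨_, ⟨i, rfl⟩, hfv⟩ := hf.exists_ge_of_mem_convexHull (Set.subset_univ _) hv
  exact hfv.trans (le_sup' (f ∘ c) (mem_univ i))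

theorem dotProduct_le_mul_dotProduct_of_le_smul {m : Type*} [Fintype m] {u v w : m → ℝ} {t : ℝ}
    (huv : u ≤ t • v) (hw : 0 ≤ w) : u ⬝ᵥ w ≤ t * (v ⬝ᵥ w) := by
  simpa only [smul_dotProduct, smul_eq_mul] using dotProduct_le_dotProduct_of_nonneg_right huv hw

theorem stmt_0_general {n N : ℕ} [NeZero N]
    (c : Fin N → Fin n → ℝ)
    (X : Set (Fin n → ℝ)) (hXnonneg : ∀ x ∈ X, ∀ j, 0 ≤ x j)
    (t : ℝ) (ht : 0 ≤ t)
    (chat : Fin n → ℝ) (hhull : chat ∈ convexHull ℝ (Set.range c))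
    (hdom : ∀ i, ∀ j, c i j ≤ t * chat j)
    (xhat : Fin n → ℝ) (hxhat : xhat ∈ X)
    (hopt : ∀ x ∈ X, ∑ j, chat j * xhat j ≤ ∑ j, chat j * x j) :
    ∀ x ∈ X,
      (Finset.univ.sup' Finset.univ_nonempty fun i => ∑ j, c i j * xhat j) ≤
        t * (Finset.univ.sup' Finset.univ_nonempty fun i => ∑ j, c i j * x j) := by
  intro x hx
  have hchat : chat ⬝ᵥ x ≤ univ.sup' univ_nonempty fun i => c i ⬝ᵥ x :=
    ((dotProductBilin ℝ ℝ).flip x).convexOn convex_univ |>.le_sup'_of_mem_convexHull_range c hhull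
  refine sup'_le _ _ fun i _ => ?_
  calc c i ⬝ᵥ xhat ≤ t * (chat ⬝ᵥ xhat) :=
        dotProduct_le_mul_dotProduct_of_le_smul (hdom i) (hXnonneg xhat hxhat)
    _ ≤ t * (chat ⬝ᵥ x) := by gcongr; exact hopt x hx
    _ ≤ t * univ.sup' univ_nonempty fun i => c i ⬝ᵥ x := by gcongr

/-- Single representative scenario from the convex hull dominating all scenarios
after scaling by `t` gives a `t`-approximation for one-stage robust optimization. -/
theorem stmt_0 {n N : ℕ} [NeZero N]
    (c : Fin N → Fin n → ℝ) (hc : ∀ i j, 0 ≤ c i j)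
    (X : Set (Fin n → ℝ)) (hXnonneg : ∀ x ∈ X, ∀ j, 0 ≤ x j) (hXne : X.Nonempty)
    (t : ℝ) (ht : 0 ≤ t)
    (chat : Fin n → ℝ) (hhull : chat ∈ convexHull ℝ (Set.range c))
    (hdom : ∀ i, ∀ j, c i j ≤ t * chat j)
    (xhat : Fin n → ℝ) (hxhat : xhat ∈ X)
    (hopt : ∀ x ∈ X, ∑ j, chat j * xhat j ≤ ∑ j, chat j * x j) :
    ∀ x ∈ X,
      (Finset.univ.sup' Finset.univ_nonempty fun i => ∑ j, c i j * xhat j) ≤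
        t * (Finset.univ.sup' Finset.univ_nonempty fun i => ∑ j, c i j * x j) :=
  stmt_0_general c X hXnonneg t ht chat hhull hdom xhat hxhat hopt
end

section
/- (Theorem 1) Let U = {c^1,…,c^N} ⊆ ℝ^n be a finite set of nonnegative scenario vectors and let ĉ ∈ ℝ^n be nonnegative. Suppose α, β ≥ 0 satisfy: (i) c^i ≤ α·ĉ componentwise for all i ∈ [N], and (ii) there exists c' ∈ conv(U) with ĉ ≤ β·c' componentwise. If x̂ ∈ X minimizes ĉᵀx over X, then for every x ∈ X it holds that max_{c ∈ U} cᵀx̂ ≤ αβ · max_{c ∈ U} cᵀx; that is, any optimizer with respect to ĉ gives an αβ-approximation to the one-stage robust optimization problem with respect to U. -/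
/-!
Bounding each scenario by `α ĉ` and using optimality of `x̂` for `ĉ` gives
`cᵀx̂ ≤ α ĉᵀx̂ ≤ α ĉᵀx ≤ αβ c'ᵀx`. The last quantity is at most `αβ` times the robust value of `x`,
because `c ↦ cᵀx` is linear and a linear function is maximized over `conv(U)` on `U`.
-/

open Matrix Finset

section RobustValue

variable {ι κ : Type*} [Fintype ι] [Fintype κ] [Nonempty κ]

noncomputable def robustValue (c : κ → ι → ℝ) (x : ι → ℝ) : ℝ :=
  univ.sup' univ_nonempty fun k => c k ⬝ᵥ x

theorem dotProduct_le_of_mem_convexHull {s : Set (ι → ℝ)} {v x : ι → ℝ} {M : ℝ}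
    (hs : ∀ u ∈ s, u ⬝ᵥ x ≤ M) (hv : v ∈ convexHull ℝ s) : v ⬝ᵥ x ≤ M :=
  convexHull_min hs
    (convex_halfSpace_le ⟨fun u w => add_dotProduct u w x, fun a u => smul_dotProduct a u x⟩ M) hv

theorem dotProduct_le_robustValue_of_mem_convexHull {c : κ → ι → ℝ} {v : ι → ℝ} (x : ι → ℝ)
    (hv : v ∈ convexHull ℝ (Set.range c)) : v ⬝ᵥ x ≤ robustValue c x :=
  dotProduct_le_of_mem_convexHull
    (by rintro _ ⟨k, rfl⟩; exact le_sup' (fun k => c k ⬝ᵥ x) (mem_univ k)) hv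

theorem robustValue_le_mul_robustValue {c : κ → ι → ℝ} {chat c' xhat x : ι → ℝ} {α β : ℝ}
    (hα : 0 ≤ α) (hβ : 0 ≤ β) (hdom : ∀ k, c k ≤ α • chat)
    (hc' : c' ∈ convexHull ℝ (Set.range c)) (hcov : chat ≤ β • c')
    (hxhat : 0 ≤ xhat) (hx : 0 ≤ x) (hopt : chat ⬝ᵥ xhat ≤ chat ⬝ᵥ x) :
    robustValue c xhat ≤ α * β * robustValue c x := by
  refine sup'_le _ _ fun k _ => ?_
  calc c k ⬝ᵥ xhat
      ≤ (α • chat) ⬝ᵥ xhat := dotProduct_le_dotProduct_of_nonneg_right (hdom k) hxhat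
    _ = α * (chat ⬝ᵥ xhat) := smul_dotProduct α chat xhat
    _ ≤ α * (chat ⬝ᵥ x) := mul_le_mul_of_nonneg_left hopt hα
    _ ≤ α * ((β • c') ⬝ᵥ x) :=
        mul_le_mul_of_nonneg_left (dotProduct_le_dotProduct_of_nonneg_right hcov hx) hα
    _ = α * β * (c' ⬝ᵥ x) := by rw [smul_dotProduct, smul_eq_mul, mul_assoc]
    _ ≤ α * β * robustValue c x :=
        mul_le_mul_of_nonneg_left (dotProduct_le_robustValue_of_mem_convexHull x hc')
          (mul_nonneg hα hβ)

end RobustValue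

theorem stmt_1_general {n N : ℕ} [NeZero N]
    (c : Fin N → Fin n → ℝ)
    (X : Set (Fin n → ℝ)) (hXnonneg : ∀ x ∈ X, ∀ j, 0 ≤ x j)
    (chat : Fin n → ℝ)
    (α β : ℝ) (hα : 0 ≤ α) (hβ : 0 ≤ β)
    (hdom : ∀ i, ∀ j, c i j ≤ α * chat j)
    (hcov : ∃ c' ∈ convexHull ℝ (Set.range c), ∀ j, chat j ≤ β * c' j)
    (xhat : Fin n → ℝ) (hxhat : xhat ∈ X)
    (hopt : ∀ x ∈ X, ∑ j, chat j * xhat j ≤ ∑ j, chat j * x j) :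
    ∀ x ∈ X,
      (Finset.univ.sup' Finset.univ_nonempty fun i => ∑ j, c i j * xhat j) ≤
        α * β * (Finset.univ.sup' Finset.univ_nonempty fun i => ∑ j, c i j * x j) := by
  obtain ⟨c', hc', hchat⟩ := hcov
  intro x hx
  exact robustValue_le_mul_robustValue hα hβ hdom hc' hchat
    (hXnonneg xhat hxhat) (hXnonneg x hx) (hopt x hx)

/-- Theorem 1: a single scenario `chat` with `c^i ≤ α chat` for all `i` and
`chat ≤ β c'` for some `c'` in the convex hull of `U` gives an `αβ`-approximation
for the one-stage robust problem. -/
theorem stmt_1 {n N : ℕ} [NeZero N]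
    (c : Fin N → Fin n → ℝ) (hc : ∀ i j, 0 ≤ c i j)
    (X : Set (Fin n → ℝ)) (hXnonneg : ∀ x ∈ X, ∀ j, 0 ≤ x j) (hXne : X.Nonempty)
    (chat : Fin n → ℝ) (hchat : ∀ j, 0 ≤ chat j)
    (α β : ℝ) (hα : 0 ≤ α) (hβ : 0 ≤ β)
    (hdom : ∀ i, ∀ j, c i j ≤ α * chat j)
    (hcov : ∃ c' ∈ convexHull ℝ (Set.range c), ∀ j, chat j ≤ β * c' j)
    (xhat : Fin n → ℝ) (hxhat : xhat ∈ X)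
    (hopt : ∀ x ∈ X, ∑ j, chat j * xhat j ≤ ∑ j, chat j * x j) :
    ∀ x ∈ X,
      (Finset.univ.sup' Finset.univ_nonempty fun i => ∑ j, c i j * xhat j) ≤
        α * β * (Finset.univ.sup' Finset.univ_nonempty fun i => ∑ j, c i j * x j) :=
  stmt_1_general c X hXnonneg chat α β hα hβ hdom hcov xhat hxhat hopt
end

section
/- Let U = {c^1,…,c^N} ⊆ ℝ^n and C = {ĉ^1,…,ĉ^K} ⊆ ℝ^n be finite sets of nonnegative vectors, and let α, β ≥ 0 satisfy: (i) for every i ∈ [N] there exists ĉ ∈ conv(C) with c^i ≤ α·ĉ componentwise, and (ii) for every k ∈ [K] there exists c ∈ conv(U) with ĉ^k ≤ β·c componentwise. Then there exists a set C' ⊆ conv(U) with |C'| ≤ K such that for every i ∈ [N] there exists c̃ ∈ conv(C') with c^i ≤ αβ·c̃ componentwise. In other words, the conditions of the multi-scenario one-stage approximation theorem can always be met with β = 1 and cluster scenarios lying in conv(U), without impairing the guarantee αβ. -/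
/-!
Choose for each cluster scenario `ĉᵏ` a point `c'ᵏ ∈ conv(U)` with `ĉᵏ ≤ β c'ᵏ`, and take
`C' = {c'ᵏ}`. The points dominated by `β` times a point of `conv(C')` form a convex set
containing `C`, hence all of `conv(C)`; composing with `cⁱ ≤ α ĉ` (using `α ≥ 0`) gives the
guarantee `αβ`.
-/

section OrderedModule

variable {𝕜 E : Type*} [CommSemiring 𝕜] [PartialOrder 𝕜]
  [AddCommMonoid E] [PartialOrder E] [IsOrderedAddMonoid E] [Module 𝕜 E] [PosSMulMono 𝕜 E]

theorem convex_setOf_le_smul_mem_convexHull (T : Set E) (β : 𝕜) :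
    Convex 𝕜 {x : E | ∃ y ∈ convexHull 𝕜 T, x ≤ β • y} := by
  rintro x₁ ⟨y₁, hy₁, hx₁⟩ x₂ ⟨y₂, hy₂, hx₂⟩ a b ha hb hab
  refine ⟨a • y₁ + b • y₂, convex_convexHull 𝕜 T hy₁ hy₂ ha hb hab, ?_⟩
  calc a • x₁ + b • x₂ ≤ a • β • y₁ + b • β • y₂ := by gcongr
    _ = β • (a • y₁ + b • y₂) := by rw [smul_add, smul_comm a, smul_comm b]

theorem exists_le_smul_mem_convexHull_of_mem_convexHull {S T : Set E} {β : 𝕜}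
    (h : ∀ x ∈ S, ∃ y ∈ convexHull 𝕜 T, x ≤ β • y) {x : E} (hx : x ∈ convexHull 𝕜 S) :
    ∃ y ∈ convexHull 𝕜 T, x ≤ β • y :=
  convexHull_min h (convex_setOf_le_smul_mem_convexHull T β) hx

end OrderedModule

theorem stmt_3_general {n N K : ℕ}
    (c : Fin N → Fin n → ℝ)
    (chat : Fin K → Fin n → ℝ)
    (α β : ℝ) (hα : 0 ≤ α)
    (hdom : ∀ i, ∃ d ∈ convexHull ℝ (Set.range chat), ∀ j, c i j ≤ α * d j)
    (hcov : ∀ k, ∃ c' ∈ convexHull ℝ (Set.range c), ∀ j, chat k j ≤ β * c' j) :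
    ∃ C' : Finset (Fin n → ℝ),
      (C' : Set (Fin n → ℝ)) ⊆ convexHull ℝ (Set.range c) ∧
      C'.card ≤ K ∧
      ∀ i, ∃ ctil ∈ convexHull ℝ (C' : Set (Fin n → ℝ)),
        ∀ j, c i j ≤ α * β * ctil j := by
  choose c' hc'mem hc'le using hcov
  have hC' : ((Finset.univ.image c' : Finset (Fin n → ℝ)) : Set (Fin n → ℝ)) = Set.range c' := by
    simp
  refine ⟨Finset.univ.image c', ?_, ?_, fun i => ?_⟩
  · rwa [hC', Set.range_subset_iff]
  · simpa using Finset.card_image_le (s := Finset.univ) (f := c')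
  · obtain ⟨d, hd, hcd⟩ := hdom i
    have hchat : ∀ x ∈ Set.range chat, ∃ y ∈ convexHull ℝ (Set.range c'), x ≤ β • y := by
      rintro _ ⟨k, rfl⟩
      exact ⟨c' k, subset_convexHull ℝ _ (Set.mem_range_self k), hc'le k⟩
    obtain ⟨y, hy, hdy⟩ := exists_le_smul_mem_convexHull_of_mem_convexHull hchat hd
    refine ⟨y, hC' ▸ hy, fun j => ?_⟩
    calc c i j ≤ α * d j := hcd j
      _ ≤ α * (β * y j) := mul_le_mul_of_nonneg_left (hdy j) hα
      _ = α * β * y j := (mul_assoc α β (y j)).symm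

/-- The conditions of the multi-scenario one-stage approximation theorem can always be
met with `β = 1` and cluster scenarios lying in `conv(U)`, without impairing the
guarantee `αβ`. -/
theorem stmt_3 {n N K : ℕ} [NeZero N] [NeZero K]
    (c : Fin N → Fin n → ℝ) (hc : ∀ i j, 0 ≤ c i j)
    (chat : Fin K → Fin n → ℝ) (hchat : ∀ k j, 0 ≤ chat k j)
    (α β : ℝ) (hα : 0 ≤ α) (hβ : 0 ≤ β)
    (hdom : ∀ i, ∃ d ∈ convexHull ℝ (Set.range chat), ∀ j, c i j ≤ α * d j)
    (hcov : ∀ k, ∃ c' ∈ convexHull ℝ (Set.range c), ∀ j, chat k j ≤ β * c' j) :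
    ∃ C' : Finset (Fin n → ℝ),
      (C' : Set (Fin n → ℝ)) ⊆ convexHull ℝ (Set.range c) ∧
      C'.card ≤ K ∧
      ∀ i, ∃ ctil ∈ convexHull ℝ (C' : Set (Fin n → ℝ)),
        ∀ j, c i j ≤ α * β * ctil j :=
  stmt_3_general c chat α β hα hdom hcov
end

section
/- (Theorem 6, two-stage, single scenario) Let U = {c^1,…,c^N} ⊆ ℝ^n be a finite set of nonnegative scenario vectors and let ĉ ∈ ℝ^n be nonnegative. Suppose α, β ≥ 1 satisfy: (i) c^i ≤ α·ĉ componentwise for all i ∈ [N], and (ii) there exists c' ∈ U with ĉ ≤ β·c' componentwise. If x̂ ∈ X' minimizes Cᵀx + inf_{y ∈ X(x)} ĉᵀy over X', then for every x ∈ X' it holds that g_U(x̂) ≤ αβ · g_U(x); that is, any optimizer with respect to ĉ gives an αβ-approximation to the two-stage robust optimization problem with respect to U. -/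
/-!
For nonnegative second-stage vectors the value `inf_{y ∈ S} cᵀy` is monotone and
positively homogeneous in the cost vector `c`. Hence every scenario costs at most `α` times the
`ĉ`-value at `x̂`, the `ĉ`-value at any `x` is at most `β` times its worst scenario, and in between
sits the optimality of `x̂` for `ĉ`. The factors `α, β ≥ 1` absorb the nonnegative first-stage cost.
-/

open Matrix Pointwise

section SecondStage

variable {ι κ : Type*} [Fintype ι]

/-- The second-stage value `inf_{y ∈ S} cᵀy` (junk value `0` when `S = ∅`). -/
noncomputable def secondStageCost (c : ι → ℝ) (S : Set (ι → ℝ)) : ℝ :=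
  sInf ((c ⬝ᵥ ·) '' S)

noncomputable def worstCaseCost [Fintype κ] [Nonempty κ] (c : κ → ι → ℝ) (S : Set (ι → ℝ)) : ℝ :=
  Finset.univ.sup' Finset.univ_nonempty fun i => secondStageCost (c i) S

variable {a b : ι → ℝ} {S : Set (ι → ℝ)}

lemma bddBelow_dotProduct_image (ha : 0 ≤ a) (hS : ∀ y ∈ S, 0 ≤ y) :
    BddBelow ((a ⬝ᵥ ·) '' S) := by
  refine ⟨0, ?_⟩
  rintro _ ⟨y, hy, rfl⟩
  exact dotProduct_nonneg_of_nonneg ha (hS y hy)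

lemma secondStageCost_mono (ha : 0 ≤ a) (hab : a ≤ b) (hS : ∀ y ∈ S, 0 ≤ y) :
    secondStageCost a S ≤ secondStageCost b S := by
  rcases S.eq_empty_or_nonempty with rfl | hne
  · simp [secondStageCost]
  refine le_csInf (hne.image _) ?_
  rintro _ ⟨y, hy, rfl⟩
  exact (csInf_le (bddBelow_dotProduct_image ha hS) ⟨y, hy, rfl⟩).trans
    (dotProduct_le_dotProduct_of_nonneg_right hab (hS y hy))

lemma secondStageCost_smul {γ : ℝ} (hγ : 0 ≤ γ) (b : ι → ℝ) (S : Set (ι → ℝ)) :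
    secondStageCost (γ • b) S = γ * secondStageCost b S := by
  have : ((γ • b) ⬝ᵥ ·) '' S = γ • ((b ⬝ᵥ ·) '' S) := by
    simp only [smul_dotProduct, ← Set.image_smul, Set.image_image]
  rw [secondStageCost, this, Real.sInf_smul_of_nonneg hγ, smul_eq_mul, secondStageCost]

lemma secondStageCost_le_smul {γ : ℝ} (hγ : 0 ≤ γ) (ha : 0 ≤ a) (hab : a ≤ γ • b)
    (hS : ∀ y ∈ S, 0 ≤ y) : secondStageCost a S ≤ γ * secondStageCost b S :=
  secondStageCost_smul hγ b S ▸ secondStageCost_mono ha hab hS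

variable [Fintype κ] [Nonempty κ] {c : κ → ι → ℝ}

lemma worstCaseCost_le_smul {α : ℝ} (hα : 0 ≤ α) (hc : ∀ i, 0 ≤ c i) (hdom : ∀ i, c i ≤ α • a)
    (hS : ∀ y ∈ S, 0 ≤ y) : worstCaseCost c S ≤ α * secondStageCost a S :=
  Finset.sup'_le _ _ fun i _ => secondStageCost_le_smul hα (hc i) (hdom i) hS

lemma secondStageCost_le_smul_worstCaseCost {β : ℝ} (hβ : 0 ≤ β) (ha : 0 ≤ a) (i : κ)
    (hcov : a ≤ β • c i) (hS : ∀ y ∈ S, 0 ≤ y) :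
    secondStageCost a S ≤ β * worstCaseCost c S :=
  (secondStageCost_le_smul hβ ha hcov hS).trans <|
    mul_le_mul_of_nonneg_left (Finset.le_sup' (fun i => secondStageCost (c i) S)
      (Finset.mem_univ i)) hβ

end SecondStage

/-- Theorem 6 (two-stage, single scenario): if `α, β ≥ 1`, `c^i ≤ α chat` for all `i`,
and `chat ≤ β c'` for some `c' ∈ U`, then any optimizer of the two-stage problem with
respect to `chat` is an `αβ`-approximation for the two-stage robust problem
with respect to `U`. -/
theorem stmt_6 {nx n N : ℕ} [NeZero N]
    (X : Set ((Fin nx → ℝ) × (Fin n → ℝ)))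
    (hXnonneg : ∀ p ∈ X, (∀ j, 0 ≤ p.1 j) ∧ (∀ j, 0 ≤ p.2 j))
    (Cst : Fin nx → ℝ) (hCst : ∀ j, 0 ≤ Cst j)
    (c : Fin N → Fin n → ℝ) (hc : ∀ i j, 0 ≤ c i j)
    (chat : Fin n → ℝ) (hchat : ∀ j, 0 ≤ chat j)
    (α β : ℝ) (hα : 1 ≤ α) (hβ : 1 ≤ β)
    (hdom : ∀ i, ∀ j, c i j ≤ α * chat j)
    (hcov : ∃ i, ∀ j, chat j ≤ β * c i j)
    (xhat : Fin nx → ℝ) (hxhat : ∃ y, (xhat, y) ∈ X)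
    (hopt : ∀ x : Fin nx → ℝ, (∃ y, (x, y) ∈ X) →
      (∑ j, Cst j * xhat j) +
          sInf ((fun y => ∑ j, chat j * y j) '' {y | (xhat, y) ∈ X}) ≤
        (∑ j, Cst j * x j) +
          sInf ((fun y => ∑ j, chat j * y j) '' {y | (x, y) ∈ X})) :
    ∀ x : Fin nx → ℝ, (∃ y, (x, y) ∈ X) →
      (∑ j, Cst j * xhat j) +
          (Finset.univ.sup' Finset.univ_nonempty fun i =>
            sInf ((fun y => ∑ j, c i j * y j) '' {y | (xhat, y) ∈ X})) ≤
        α * β * ((∑ j, Cst j * x j) +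
          (Finset.univ.sup' Finset.univ_nonempty fun i =>
            sInf ((fun y => ∑ j, c i j * y j) '' {y | (x, y) ∈ X}))) := by
  intro x hx
  obtain ⟨i₀, hi₀⟩ := hcov
  have hα₀ : 0 ≤ α := zero_le_one.trans hα
  have hsecond (z : Fin nx → ℝ) : ∀ y ∈ {y | (z, y) ∈ X}, 0 ≤ y := fun y hy => (hXnonneg _ hy).2
  have hfirst {z : Fin nx → ℝ} (hz : ∃ y, (z, y) ∈ X) : 0 ≤ Cst ⬝ᵥ z := by
    obtain ⟨y, hy⟩ := hz
    exact dotProduct_nonneg_of_nonneg hCst (hXnonneg _ hy).1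
  calc Cst ⬝ᵥ xhat + worstCaseCost c {y | (xhat, y) ∈ X}
      ≤ Cst ⬝ᵥ xhat + α * secondStageCost chat {y | (xhat, y) ∈ X} := by
        gcongr; exact worstCaseCost_le_smul hα₀ hc hdom (hsecond xhat)
    _ ≤ α * (Cst ⬝ᵥ xhat + secondStageCost chat {y | (xhat, y) ∈ X}) := by
        linarith [le_mul_of_one_le_left (hfirst hxhat) hα]
    _ ≤ α * (Cst ⬝ᵥ x + secondStageCost chat {y | (x, y) ∈ X}) :=
        mul_le_mul_of_nonneg_left (hopt x hx) hα₀
    _ ≤ α * (Cst ⬝ᵥ x + β * worstCaseCost c {y | (x, y) ∈ X}) := by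
        gcongr
        exact secondStageCost_le_smul_worstCaseCost (zero_le_one.trans hβ) hchat i₀ hi₀ (hsecond x)
    _ ≤ α * β * (Cst ⬝ᵥ x + worstCaseCost c {y | (x, y) ∈ X}) := by
        rw [mul_assoc]
        gcongr
        linarith [le_mul_of_one_le_left (hfirst hx) hβ]
end

section
/- (Optimal two-stage cluster scenarios can be chosen from U) Let U = {c^1,…,c^N} ⊆ ℝ^n and C = {ĉ^1,…,ĉ^K} ⊆ ℝ^n be finite sets of nonnegative vectors, and let α, β ≥ 1 satisfy: (i) for every i ∈ [N] there exists k ∈ [K] with c^i ≤ α·ĉ^k componentwise, and (ii) for every k ∈ [K] there exists i ∈ [N] with ĉ^k ≤ β·c^i componentwise. Then there exists a subset C' ⊆ U with |C'| ≤ K such that for every i ∈ [N] there exists c ∈ C' with c^i ≤ αβ·c componentwise; in particular, C' satisfies conditions (i) and (ii) with parameters α' = αβ and β' = 1 and yields the same approximation guarantee αβ. -/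
/-! The representatives are the images of a choice function `k ↦ i(k)` with `ĉ^k ≤ β c^{i(k)}`:
there are at most `K` of them, and if `c^i ≤ α ĉ^k` then `c^i ≤ α β c^{i(k)}`. -/

theorem exists_finset_card_le_forall_exists_comp {ι κ : Type*} [Fintype κ] [DecidableEq ι]
    {R : ι → κ → Prop} {S : κ → ι → Prop} (hR : ∀ i, ∃ k, R i k) (hS : ∀ k, ∃ i, S k i) :
    ∃ T : Finset ι, T.card ≤ Fintype.card κ ∧ ∀ i, ∃ l ∈ T, Relation.Comp R S i l := by
  choose f hf using hS
  refine ⟨Finset.univ.image f, Finset.card_image_le, fun i => ?_⟩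
  obtain ⟨k, hk⟩ := hR i
  exact ⟨f k, Finset.mem_image_of_mem f (Finset.mem_univ k), k, hk, hf k⟩

theorem stmt_8_general {n N K : ℕ}
    (c : Fin N → Fin n → ℝ)
    (chat : Fin K → Fin n → ℝ)
    (α β : ℝ) (hα : 1 ≤ α)
    (hdom : ∀ i, ∃ k, ∀ j, c i j ≤ α * chat k j)
    (hcov : ∀ k, ∃ i, ∀ j, chat k j ≤ β * c i j) :
    ∃ S : Finset (Fin N), S.card ≤ K ∧
      ∀ i, ∃ l ∈ S, ∀ j, c i j ≤ α * β * c l j := by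
  obtain ⟨S, hcard, hcover⟩ := exists_finset_card_le_forall_exists_comp hdom hcov
  refine ⟨S, hcard.trans_eq (Fintype.card_fin K), fun i => ?_⟩
  obtain ⟨l, hl, k, hik, hkl⟩ := hcover i
  refine ⟨l, hl, fun j => ?_⟩
  calc c i j ≤ α * chat k j := hik j
    _ ≤ α * (β * c l j) := mul_le_mul_of_nonneg_left (hkl j) (by linarith)
    _ = α * β * c l j := (mul_assoc α β (c l j)).symm

/-- Optimal two-stage cluster scenarios can be chosen from `U`: under the two-stage
domination conditions with parameters `α, β ≥ 1`, there is a subset `C' ⊆ U` of at most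
`K` scenarios such that every `c^i` is dominated by `αβ` times some member of `C'`
(i.e. conditions (i) and (ii) hold with `α' = αβ`, `β' = 1`). -/
theorem stmt_8 {n N K : ℕ} [NeZero N] [NeZero K]
    (c : Fin N → Fin n → ℝ) (hc : ∀ i j, 0 ≤ c i j)
    (chat : Fin K → Fin n → ℝ) (hchat : ∀ k j, 0 ≤ chat k j)
    (α β : ℝ) (hα : 1 ≤ α) (hβ : 1 ≤ β)
    (hdom : ∀ i, ∃ k, ∀ j, c i j ≤ α * chat k j)
    (hcov : ∀ k, ∃ i, ∀ j, chat k j ≤ β * c i j) :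
    ∃ S : Finset (Fin N), S.card ≤ K ∧
      ∀ i, ∃ l ∈ S, ∀ j, c i j ≤ α * β * c l j :=
  stmt_8_general c chat α β hα hdom hcov
end

section
/- (Corollary 8) Let U = {c^1,…,c^N} ⊆ ℝ^n be a finite set of nonnegative scenario vectors and let C_1 ∪ C_2 ∪ … ∪ C_K be a partition of U into nonempty parts. For each k ∈ [K] let ĉ^k = (1/|C_k|) Σ_{c ∈ C_k} c be the average scenario of part C_k, and set U' = {ĉ^1,…,ĉ^K}. If x̂ ∈ X minimizes max_{c ∈ U'} cᵀx over X, then for every x ∈ X it holds that max_{c ∈ U} cᵀx̂ ≤ (max_{k ∈ [K]} |C_k|) · max_{c ∈ U} cᵀx; that is, an optimizer of the robust problem with respect to U' is a max_{k∈[K]} |C_k|-approximation for the robust problem with respect to U. -/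
/-! An optimizer `x̂` for the averaged scenarios loses at most the factor `max_k |C_k|`:
a scenario `c ∈ C_k` satisfies `cᵀx̂ ≤ |C_k| · ĉᵏᵀx̂` because all values `c'ᵀx̂` are
nonnegative, while for any `x` the average `ĉᵏᵀx` is at most `max_{c ∈ U} cᵀx`. -/

open Finset

namespace Finset

variable {ι : Type*}

lemma le_card_mul_inv_card_mul_sum {s : Finset ι} {f : ι → ℝ} (hf : ∀ i ∈ s, 0 ≤ f i)
    {i : ι} (hi : i ∈ s) : f i ≤ #s * ((#s : ℝ)⁻¹ * ∑ i ∈ s, f i) := by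
  have hs : (#s : ℝ) ≠ 0 := by exact_mod_cast (card_pos.mpr ⟨i, hi⟩).ne'
  rw [mul_inv_cancel_left₀ hs]
  exact single_le_sum hf hi

lemma inv_card_mul_sum_le {s : Finset ι} (hs : s.Nonempty) {f : ι → ℝ} {b : ℝ}
    (hfb : ∀ i ∈ s, f i ≤ b) : (#s : ℝ)⁻¹ * ∑ i ∈ s, f i ≤ b := by
  have hcard : (0 : ℝ) < #s := by exact_mod_cast hs.card_pos
  rw [inv_mul_le_iff₀ hcard, ← nsmul_eq_mul]
  exact sum_le_card_nsmul s f b hfb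

end Finset

section PartAverage

variable {ι κ : Type*} [Fintype ι] [Nonempty ι] [Fintype κ] [Nonempty κ] [DecidableEq κ]

noncomputable def partAverage (P : ι → κ) (f : ι → ℝ) (k : κ) : ℝ :=
  (#{i | P i = k} : ℝ)⁻¹ * ∑ i with P i = k, f i

lemma sup'_le_sup'_card_mul_sup'_partAverage (P : ι → κ) {f : ι → ℝ} (hf : 0 ≤ f) :
    univ.sup' univ_nonempty f ≤
      (univ.sup' univ_nonempty fun k => (#{i | P i = k} : ℝ)) *
        univ.sup' univ_nonempty (partAverage P f) := by
  refine sup'_le _ _ fun i _ => ?_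
  have hmem : i ∈ ({i' | P i' = P i} : Finset ι) := by simp
  calc f i ≤ #{i' | P i' = P i} * partAverage P f (P i) :=
        le_card_mul_inv_card_mul_sum (fun i' _ => hf i') hmem
    _ ≤ _ :=
        mul_le_mul (le_sup' (fun k => (#{i | P i = k} : ℝ)) (mem_univ (P i)))
          (le_sup' (partAverage P f) (mem_univ (P i)))
          (mul_nonneg (by positivity) (sum_nonneg fun i' _ => hf i'))
          (le_sup'_of_le _ (mem_univ (P i)) (Nat.cast_nonneg _))

lemma sup'_partAverage_le_sup' {P : ι → κ} (hP : Function.Surjective P) (f : ι → ℝ) :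
    univ.sup' univ_nonempty (partAverage P f) ≤ univ.sup' univ_nonempty f := by
  refine sup'_le _ _ fun k _ => inv_card_mul_sum_le ?_ fun i _ => le_sup' f (mem_univ i)
  obtain ⟨i, rfl⟩ := hP k
  exact ⟨i, by simp⟩

end PartAverage

theorem stmt_9_general {n N K : ℕ} [NeZero N] [NeZero K]
    (c : Fin N → Fin n → ℝ) (hc : ∀ i j, 0 ≤ c i j)
    (X : Set (Fin n → ℝ)) (hXnonneg : ∀ x ∈ X, ∀ j, 0 ≤ x j)
    (P : Fin N → Fin K) (hP : ∀ k, ∃ i, P i = k)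
    (chat : Fin K → Fin n → ℝ)
    (hchat : ∀ k j, chat k j =
      (((Finset.univ.filter fun i => P i = k).card : ℝ))⁻¹ *
        ∑ i ∈ Finset.univ.filter fun i => P i = k, c i j)
    (xhat : Fin n → ℝ) (hxhat : xhat ∈ X)
    (hopt : ∀ x ∈ X,
      (Finset.univ.sup' Finset.univ_nonempty fun k => ∑ j, chat k j * xhat j) ≤
        Finset.univ.sup' Finset.univ_nonempty fun k => ∑ j, chat k j * x j) :
    ∀ x ∈ X,
      (Finset.univ.sup' Finset.univ_nonempty fun i => ∑ j, c i j * xhat j) ≤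
        (Finset.univ.sup' Finset.univ_nonempty fun k =>
            (((Finset.univ.filter fun i => P i = k).card : ℝ))) *
          (Finset.univ.sup' Finset.univ_nonempty fun i => ∑ j, c i j * x j) := by
  intro x hx
  have hchat_dot (y : Fin n → ℝ) :
      (fun k => chat k ⬝ᵥ y) = partAverage P fun i => c i ⬝ᵥ y := by
    ext k
    have hchat_k : chat k = (#{i | P i = k} : ℝ)⁻¹ • ∑ i with P i = k, c i := by
      ext j; simp [hchat, Finset.sum_apply]
    rw [hchat_k, smul_dotProduct, sum_dotProduct, smul_eq_mul, partAverage]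
  have hval_nonneg : 0 ≤ fun i => c i ⬝ᵥ xhat := fun i =>
    sum_nonneg fun j _ => mul_nonneg (hc i j) (hXnonneg xhat hxhat j)
  have hmaxCard_nonneg : 0 ≤ univ.sup' univ_nonempty fun k => (#{i | P i = k} : ℝ) :=
    le_sup'_of_le _ (mem_univ 0) (Nat.cast_nonneg _)
  calc univ.sup' univ_nonempty (fun i => c i ⬝ᵥ xhat)
      ≤ _ * univ.sup' univ_nonempty (fun k => chat k ⬝ᵥ xhat) := by
        rw [hchat_dot]; exact sup'_le_sup'_card_mul_sup'_partAverage P hval_nonneg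
    _ ≤ _ * univ.sup' univ_nonempty (fun k => chat k ⬝ᵥ x) := by
        exact mul_le_mul_of_nonneg_left (hopt x hx) hmaxCard_nonneg
    _ ≤ _ := by
        rw [hchat_dot]
        exact mul_le_mul_of_nonneg_left (sup'_partAverage_le_sup' hP _) hmaxCard_nonneg

/-- Corollary 8: partition the scenarios of `U` into `K` nonempty parts (given by the
assignment map `P`) and replace each part by its average scenario. A robust optimizer
with respect to the averaged set is a `max_k |C_k|`-approximation for the robust
problem with respect to `U`. -/
theorem stmt_9 {n N K : ℕ} [NeZero N] [NeZero K]
    (c : Fin N → Fin n → ℝ) (hc : ∀ i j, 0 ≤ c i j)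
    (X : Set (Fin n → ℝ)) (hXnonneg : ∀ x ∈ X, ∀ j, 0 ≤ x j) (hXne : X.Nonempty)
    (P : Fin N → Fin K) (hP : ∀ k, ∃ i, P i = k)
    (chat : Fin K → Fin n → ℝ)
    (hchat : ∀ k j, chat k j =
      (((Finset.univ.filter fun i => P i = k).card : ℝ))⁻¹ *
        ∑ i ∈ Finset.univ.filter fun i => P i = k, c i j)
    (xhat : Fin n → ℝ) (hxhat : xhat ∈ X)
    (hopt : ∀ x ∈ X,
      (Finset.univ.sup' Finset.univ_nonempty fun k => ∑ j, chat k j * xhat j) ≤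
        Finset.univ.sup' Finset.univ_nonempty fun k => ∑ j, chat k j * x j) :
    ∀ x ∈ X,
      (Finset.univ.sup' Finset.univ_nonempty fun i => ∑ j, c i j * xhat j) ≤
        (Finset.univ.sup' Finset.univ_nonempty fun k =>
            (((Finset.univ.filter fun i => P i = k).card : ℝ))) *
          (Finset.univ.sup' Finset.univ_nonempty fun i => ∑ j, c i j * x j) :=
  stmt_9_general c hc X hXnonneg P hP chat hchat xhat hxhat hopt
end

section
/- (Corollary 9) Let U = {c^1,…,c^N} ⊆ ℝ^n be a finite set of N nonnegative scenario vectors and let K be an integer with 1 ≤ K ≤ N. Then there exists a set C ⊆ conv(U) with |C| ≤ K such that for every i ∈ [N] there is ĉ ∈ conv(C) with c^i ≤ ⌈N/K⌉ · ĉ componentwise; consequently, the one-stage scenario reduction problem admits a solution with K cluster scenarios whose approximation guarantee is at most ⌈N/K⌉. -/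
/-!
Cut the `N` scenarios into at most `K` groups of at most `M = ⌈N/K⌉` scenarios each and let `C`
consist of the group means. Since scenarios are nonnegative, a scenario is dominated by the sum
of its group, which is `|group| • mean ≤ M • mean`.
-/

open Finset

theorem exists_fin_map_card_fiber_le {N K M : ℕ} (h : N ≤ K * M) :
    ∃ f : Fin N → Fin K, ∀ g, #{i | f i = g} ≤ M := by
  rcases Nat.eq_zero_or_pos M with rfl | hM
  · obtain rfl : N = 0 := by simpa using h
    exact ⟨Fin.elim0, fun g => by simp⟩
  refine ⟨fun i => ⟨i / M, (Nat.div_lt_iff_lt_mul hM).2 (i.2.trans_le h)⟩, fun g => ?_⟩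
  calc #{i | _} ≤ #(range M) := by
        refine card_le_card_of_injOn (fun i : Fin N => (i : ℕ) % M)
          (fun i _ => mem_range.2 (Nat.mod_lt _ hM)) (fun i hi j hj hij => ?_)
        simp only [coe_filter, mem_univ, true_and, Set.mem_ofPred_eq, Fin.ext_iff] at hi hj
        exact Fin.ext (Nat.ext_div_modEq (hi.trans hj.symm) hij)
    _ = M := card_range M

variable {𝕜 E ι κ : Type*} [Field 𝕜] [LinearOrder 𝕜] [IsStrictOrderedRing 𝕜]
  [AddCommGroup E] [PartialOrder E] [IsOrderedAddMonoid E] [Module 𝕜 E]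

theorem Finset.le_card_smul_centerMass [PosSMulMono 𝕜 E] {s : Finset ι} {z : ι → E} {i : ι}
    (hz : ∀ j ∈ s, 0 ≤ z j) (hi : i ∈ s) :
    z i ≤ (#s : 𝕜) • s.centerMass (fun _ => (1 : 𝕜)) z := by
  have hs : (#s : 𝕜) ≠ 0 := Nat.cast_ne_zero.2 (card_ne_zero_of_mem hi)
  simp only [centerMass, sum_const, nsmul_eq_mul, mul_one, one_smul, smul_smul,
    mul_inv_cancel₀ hs]
  exact single_le_sum hz hi

theorem Finset.centerMass_nonneg [PosSMulMono 𝕜 E] {s : Finset ι} {w : ι → 𝕜} {z : ι → E}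
    (hw : ∀ j ∈ s, 0 ≤ w j) (hz : ∀ j ∈ s, 0 ≤ z j) : 0 ≤ s.centerMass w z :=
  smul_nonneg (inv_nonneg.2 (sum_nonneg hw))
    (sum_nonneg fun j hj => smul_nonneg (hw j hj) (hz j hj))

theorem exists_dominating_centerMasses [IsOrderedModule 𝕜 E] [Fintype ι] [Fintype κ]
    [DecidableEq κ] [DecidableEq E] {z : ι → E} (hz : ∀ i, 0 ≤ z i) (f : ι → κ) {M : ℕ}
    (hf : ∀ g, #{i | f i = g} ≤ M) :
    ∃ C : Finset E, (C : Set E) ⊆ convexHull 𝕜 (Set.range z) ∧ #C ≤ Fintype.card κ ∧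
      ∀ i, ∃ chat ∈ convexHull 𝕜 (C : Set E), z i ≤ (M : 𝕜) • chat := by
  set mean : κ → E := fun g => centerMass {i | f i = g} (fun _ => (1 : 𝕜)) z
  refine ⟨(univ.image f).image mean, ?_, card_image_le.trans (card_le_univ _), fun i => ?_⟩
  · simp only [coe_image, coe_univ, Set.image_univ, Set.image_subset_iff]
    rintro _ ⟨i, rfl⟩
    refine centerMass_mem_convexHull _ (fun _ _ => zero_le_one) ?_ fun j _ => Set.mem_range_self j
    simpa using card_pos.2 ⟨i, by simp⟩
  · have hi : i ∈ ({j | f j = f i} : Finset ι) := by simp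
    refine ⟨mean (f i), subset_convexHull 𝕜 _ (by simp), ?_⟩
    calc z i ≤ (#{j | f j = f i} : 𝕜) • mean (f i) := le_card_smul_centerMass (fun j _ => hz j) hi
      _ ≤ (M : 𝕜) • mean (f i) := by
        gcongr
        · exact centerMass_nonneg (fun _ _ => zero_le_one) fun j _ => hz j
        · exact_mod_cast hf (f i)

theorem stmt_10_general {n N : ℕ}
    (c : Fin N → Fin n → ℝ) (hc : ∀ i j, 0 ≤ c i j)
    (K : ℕ) (hK1 : 1 ≤ K) :
    ∃ C : Finset (Fin n → ℝ),
      (C : Set (Fin n → ℝ)) ⊆ convexHull ℝ (Set.range c) ∧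
      C.card ≤ K ∧
      ∀ i, ∃ chat ∈ convexHull ℝ (C : Set (Fin n → ℝ)),
        ∀ j, c i j ≤ (⌈(N : ℝ) / (K : ℝ)⌉ : ℝ) * chat j := by
  classical
  have hNK : N ≤ K * ⌈(N : ℝ) / K⌉₊ := by
    have hK : (0 : ℝ) < K := by exact_mod_cast hK1
    exact_mod_cast (div_le_iff₀' hK).1 (Nat.le_ceil ((N : ℝ) / K))
  obtain ⟨f, hf⟩ := exists_fin_map_card_fiber_le hNK
  obtain ⟨C, hCU, hCK, hdom⟩ := exists_dominating_centerMasses (𝕜 := ℝ) (z := c) (hc ·) f hf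
  refine ⟨C, hCU, by simpa using hCK, fun i => ?_⟩
  obtain ⟨chat, hchat, hle⟩ := hdom i
  refine ⟨chat, hchat, fun j => ?_⟩
  rw [← natCast_ceil_eq_intCast_ceil (by positivity)]
  exact hle j

/-- Corollary 9: for any `1 ≤ K ≤ N` there exists a reduced set `C ⊆ conv(U)` of at most
`K` scenarios whose approximation guarantee is at most `⌈N/K⌉`. -/
theorem stmt_10 {n N : ℕ} [NeZero N]
    (c : Fin N → Fin n → ℝ) (hc : ∀ i j, 0 ≤ c i j)
    (K : ℕ) (hK1 : 1 ≤ K) (hKN : K ≤ N) :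
    ∃ C : Finset (Fin n → ℝ),
      (C : Set (Fin n → ℝ)) ⊆ convexHull ℝ (Set.range c) ∧
      C.card ≤ K ∧
      ∀ i, ∃ chat ∈ convexHull ℝ (C : Set (Fin n → ℝ)),
        ∀ j, c i j ≤ (⌈(N : ℝ) / (K : ℝ)⌉ : ℝ) * chat j :=
  stmt_10_general c hc K hK1
end

section
/- (Midpoint scenario gives an N-approximation) Let U = {c^1,…,c^N} ⊆ ℝ^n be a finite set of nonnegative scenario vectors and let ĉ = (1/N) Σ_{i∈[N]} c^i be the average (midpoint) scenario. If x̂ ∈ X minimizes ĉᵀx over X, then for every x ∈ X it holds that max_{c ∈ U} cᵀx̂ ≤ N · max_{c ∈ U} cᵀx; that is, solving the one-stage problem with respect to the average scenario gives an N-approximation for the robust problem with respect to U. -/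
/-!
Summing the objective over all scenarios gives `N` times the objective of the average scenario,
so `x̂` also minimizes the total `∑ᵢ cⁱᵀx`. For nonnegative data the worst scenario is at most
this total, and the total is at most `N` times the worst scenario; chaining the three bounds
gives the factor `N`.
-/

open Finset Matrix

namespace Finset

variable {ι M : Type*} [AddCommMonoid M] [LinearOrder M] [IsOrderedAddMonoid M]

theorem sup'_le_sum_of_nonneg {s : Finset ι} (hs : s.Nonempty) {f : ι → M}
    (hf : ∀ i ∈ s, 0 ≤ f i) : s.sup' hs f ≤ ∑ i ∈ s, f i :=
  sup'_le hs f fun _ hi => single_le_sum hf hi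

theorem sum_le_card_nsmul_sup' {s : Finset ι} (hs : s.Nonempty) (f : ι → M) :
    ∑ i ∈ s, f i ≤ #s • s.sup' hs f :=
  sum_le_card_nsmul s f _ fun _ hi => le_sup' f hi

end Finset

theorem sup'_dotProduct_le_card_mul_sup'_of_sum_dotProduct_le {ι κ : Type*} [Fintype ι]
    [Nonempty ι] [Fintype κ] {c : ι → κ → ℝ} (hc : ∀ i, 0 ≤ c i) {xhat : κ → ℝ} (hxhat : 0 ≤ xhat)
    {x : κ → ℝ} (hopt : (∑ i, c i) ⬝ᵥ xhat ≤ (∑ i, c i) ⬝ᵥ x) :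
    univ.sup' univ_nonempty (fun i => c i ⬝ᵥ xhat) ≤
      Fintype.card ι * univ.sup' univ_nonempty (fun i => c i ⬝ᵥ x) :=
  calc univ.sup' univ_nonempty (fun i => c i ⬝ᵥ xhat)
      ≤ ∑ i, c i ⬝ᵥ xhat :=
        sup'_le_sum_of_nonneg _ fun i _ => dotProduct_nonneg_of_nonneg (hc i) hxhat
    _ = (∑ i, c i) ⬝ᵥ xhat := (sum_dotProduct _ _ _).symm
    _ ≤ (∑ i, c i) ⬝ᵥ x := hopt
    _ = ∑ i, c i ⬝ᵥ x := sum_dotProduct _ _ _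
    _ ≤ Fintype.card ι * univ.sup' univ_nonempty (fun i => c i ⬝ᵥ x) := by
        simpa only [card_univ, nsmul_eq_mul] using
          sum_le_card_nsmul_sup' univ_nonempty fun i => c i ⬝ᵥ x

theorem stmt_11_general {n N : ℕ} [NeZero N]
    (c : Fin N → Fin n → ℝ) (hc : ∀ i j, 0 ≤ c i j)
    (X : Set (Fin n → ℝ)) (hXnonneg : ∀ x ∈ X, ∀ j, 0 ≤ x j)
    (chat : Fin n → ℝ) (hchat : ∀ j, chat j = (N : ℝ)⁻¹ * ∑ i, c i j)
    (xhat : Fin n → ℝ) (hxhat : xhat ∈ X)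
    (hopt : ∀ x ∈ X, ∑ j, chat j * xhat j ≤ ∑ j, chat j * x j) :
    ∀ x ∈ X,
      (Finset.univ.sup' Finset.univ_nonempty fun i => ∑ j, c i j * xhat j) ≤
        (N : ℝ) * (Finset.univ.sup' Finset.univ_nonempty fun i => ∑ j, c i j * x j) := by
  intro x hx
  have hchat_eq : chat = (N : ℝ)⁻¹ • ∑ i, c i := funext fun j => by simp [hchat j]
  have hsum : (∑ i, c i) ⬝ᵥ xhat ≤ (∑ i, c i) ⬝ᵥ x := by
    have h := hopt x hx
    change chat ⬝ᵥ xhat ≤ chat ⬝ᵥ x at h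
    rw [hchat_eq, smul_dotProduct, smul_dotProduct, smul_eq_mul, smul_eq_mul] at h
    exact le_of_mul_le_mul_left h (by simpa using NeZero.pos N)
  have h := sup'_dotProduct_le_card_mul_sup'_of_sum_dotProduct_le (fun i j => hc i j)
    (hXnonneg xhat hxhat) hsum
  rwa [Fintype.card_fin] at h

/-- The midpoint (average) scenario gives an `N`-approximation for the one-stage
robust problem. -/
theorem stmt_11 {n N : ℕ} [NeZero N]
    (c : Fin N → Fin n → ℝ) (hc : ∀ i j, 0 ≤ c i j)
    (X : Set (Fin n → ℝ)) (hXnonneg : ∀ x ∈ X, ∀ j, 0 ≤ x j) (hXne : X.Nonempty)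
    (chat : Fin n → ℝ) (hchat : ∀ j, chat j = (N : ℝ)⁻¹ * ∑ i, c i j)
    (xhat : Fin n → ℝ) (hxhat : xhat ∈ X)
    (hopt : ∀ x ∈ X, ∑ j, chat j * xhat j ≤ ∑ j, chat j * x j) :
    ∀ x ∈ X,
      (Finset.univ.sup' Finset.univ_nonempty fun i => ∑ j, c i j * xhat j) ≤
        (N : ℝ) * (Finset.univ.sup' Finset.univ_nonempty fun i => ∑ j, c i j * x j) :=
  stmt_11_general c hc X hXnonneg chat hchat xhat hxhat hopt
end

section
/- (Two-stage example: the midpoint approach gives no approximation guarantee) Fix λ ∈ (0,1) and M > 0 with M · min(λ, 1−λ) > 1. Let X = {(x,y) ∈ {0,1}^2 × {0,1}^2 : x_1 + x_2 + y_1 + y_2 = 1}, first-stage costs C = (1,1), U = {(M,0), (0,M)}, and ĉ = λ·(M,0) + (1−λ)·(0,M) = (λM, (1−λ)M). Then every x̂ ∈ X' minimizing Cᵀx + min_{y ∈ X(x)} ĉᵀy over X' satisfies x̂ ∈ {(1,0), (0,1)} and g_U(x̂) = 1, while min_{x ∈ X'} g_U(x) = 0. In particular, for every α ≥ 0 there is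 such an instance where g_U(x̂) > α · min_{x ∈ X'} g_U(x), so solving with respect to a strict convex combination of the scenarios does not give any finite approximation guarantee for the two-stage robust problem. -/
/-!
The feasible set consists of the four points `(eᵢ, 0)` and `(0, eᵢ)`. Deciding nothing in the
first stage leaves the choice of `eᵢ` to the second stage at cost `min c₀ c₁`: this is `0` in
both scenarios of `U`, so `g_U 0 = 0`, but it is `min (λM) ((1-λ)M) > 1` under `ĉ`. Hence the
`ĉ`-optimal decision buys a unit vector in the first stage at cost `1`, and then
`g_U = 1` whatever the scenario.
-/

def unitChoices : Set ((Fin 2 → ℝ) × (Fin 2 → ℝ)) :=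
  {p | (∀ j, p.1 j = 0 ∨ p.1 j = 1) ∧ (∀ j, p.2 j = 0 ∨ p.2 j = 1) ∧
    p.1 0 + p.1 1 + p.2 0 + p.2 1 = 1}

theorem mk_mem_unitChoices_iff {x y : Fin 2 → ℝ} :
    (x, y) ∈ unitChoices ↔
      (x = ![1, 0] ∧ y = ![0, 0]) ∨ (x = ![0, 1] ∧ y = ![0, 0]) ∨
      (x = ![0, 0] ∧ y = ![1, 0]) ∨ (x = ![0, 0] ∧ y = ![0, 1]) := by
  simp only [unitChoices, Set.mem_ofPred_eq, funext_iff, Fin.forall_fin_two,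
    Matrix.cons_val_zero, Matrix.cons_val_one]
  constructor
  · rintro ⟨⟨hx0 | hx0, hx1 | hx1⟩, ⟨hy0 | hy0, hy1 | hy1⟩, hsum⟩ <;>
      norm_num [hx0, hx1, hy0, hy1] at hsum <;> simp [hx0, hx1, hy0, hy1]
  · rintro (⟨⟨hx0, hx1⟩, hy0, hy1⟩ | ⟨⟨hx0, hx1⟩, hy0, hy1⟩ | ⟨⟨hx0, hx1⟩, hy0, hy1⟩ |
      ⟨⟨hx0, hx1⟩, hy0, hy1⟩) <;> simp [hx0, hx1, hy0, hy1]

theorem firstStage_unitChoices :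
    {x | ∃ y, (x, y) ∈ unitChoices} = {![0, 0], ![1, 0], ![0, 1]} := by
  ext x
  simp only [mk_mem_unitChoices_iff, Set.mem_insert_iff, Set.mem_singleton_iff]
  constructor
  · rintro ⟨y, ⟨rfl, -⟩ | ⟨rfl, -⟩ | ⟨rfl, -⟩ | ⟨rfl, -⟩⟩ <;> simp
  · rintro (rfl | rfl | rfl) <;> simp

theorem fiber_unitChoices_zero :
    {y | (![0, 0], y) ∈ unitChoices} = {![1, 0], ![0, 1]} := by
  ext y; simp [mk_mem_unitChoices_iff]

theorem fiber_unitChoices_unit {x : Fin 2 → ℝ} (hx : x = ![1, 0] ∨ x = ![0, 1]) :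
    {y | (x, y) ∈ unitChoices} = {![0, 0]} := by
  ext y; rcases hx with rfl | rfl <;> simp [mk_mem_unitChoices_iff]

theorem Fin.sup'_univ_two {α : Type*} [LinearOrder α] (h : Fin 2 → α) :
    Finset.univ.sup' Finset.univ_nonempty h = max (h 0) (h 1) := by
  simp [Fin.univ_succ]

noncomputable def recourseCost (c x : Fin 2 → ℝ) : ℝ :=
  sInf ((fun y => ∑ j, c j * y j) '' {y | (x, y) ∈ unitChoices})

theorem recourseCost_zero (c : Fin 2 → ℝ) : recourseCost c ![0, 0] = min (c 0) (c 1) := by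
  simp [recourseCost, fiber_unitChoices_zero, Set.image_pair]

theorem recourseCost_unit (c : Fin 2 → ℝ) {x : Fin 2 → ℝ}
    (hx : x = ![1, 0] ∨ x = ![0, 1]) : recourseCost c x = 0 := by
  simp [recourseCost, fiber_unitChoices_unit hx]

theorem stmt_15_general (lam M : ℝ) (hM : 0 < M)
    (hMbig : 1 < M * min lam (1 - lam))
    (X : Set ((Fin 2 → ℝ) × (Fin 2 → ℝ)))
    (hX : X = {p | (∀ j, p.1 j = 0 ∨ p.1 j = 1) ∧ (∀ j, p.2 j = 0 ∨ p.2 j = 1) ∧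
      p.1 0 + p.1 1 + p.2 0 + p.2 1 = 1})
    (c : Fin 2 → Fin 2 → ℝ) (hc0 : c 0 = ![M, 0]) (hc1 : c 1 = ![0, M])
    (chat : Fin 2 → ℝ) (hchat : chat = ![lam * M, (1 - lam) * M])
    (f : (Fin 2 → ℝ) → ℝ)
    (hf : ∀ x, f x = (1 * x 0 + 1 * x 1) +
      sInf ((fun y => ∑ j, chat j * y j) '' {y | (x, y) ∈ X}))
    (g : (Fin 2 → ℝ) → ℝ)
    (hg : ∀ x, g x = (1 * x 0 + 1 * x 1) +
      (Finset.univ.sup' Finset.univ_nonempty fun i =>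
        sInf ((fun y => ∑ j, c i j * y j) '' {y | (x, y) ∈ X}))) :
    (∀ xhat ∈ {x : Fin 2 → ℝ | ∃ y, (x, y) ∈ X},
      (∀ x ∈ {x : Fin 2 → ℝ | ∃ y, (x, y) ∈ X}, f xhat ≤ f x) →
        (xhat = ![1, 0] ∨ xhat = ![0, 1]) ∧ g xhat = 1) ∧
    (∃ x ∈ {x : Fin 2 → ℝ | ∃ y, (x, y) ∈ X}, g x = 0) ∧
    (∀ x ∈ {x : Fin 2 → ℝ | ∃ y, (x, y) ∈ X}, 0 ≤ g x) := by
  replace hX : X = unitChoices := hX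
  subst hX
  replace hf (x) : f x = x 0 + x 1 + recourseCost chat x := by
    rw [hf, one_mul, one_mul]; rfl
  replace hg (x) : g x = x 0 + x 1 + max (recourseCost (c 0) x) (recourseCost (c 1) x) := by
    rw [hg, Fin.sup'_univ_two, one_mul, one_mul]; rfl
  have hg_unit {x : Fin 2 → ℝ} (hx : x = ![1, 0] ∨ x = ![0, 1]) : g x = 1 := by
    rcases hx with rfl | rfl <;> simp [hg, recourseCost_unit]
  have hg_zero : g ![0, 0] = 0 := by
    simp [hg, recourseCost_zero, hc0, hc1, hM.le]
  have hf_zero : 1 < f ![0, 0] := by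
    have hmin : 1 < min (lam * M) ((1 - lam) * M) := by
      rwa [← min_mul_of_nonneg _ _ hM.le, mul_comm]
    simpa [hf, recourseCost_zero, hchat] using hmin
  have hf_unit : f ![1, 0] = 1 := by simp [hf, recourseCost_unit]
  rw [firstStage_unitChoices]
  refine ⟨fun xhat hxhat hmin => ?_, ⟨![0, 0], by simp, hg_zero⟩, fun x hx => ?_⟩
  · have hxhat : xhat = ![1, 0] ∨ xhat = ![0, 1] := by
      rcases hxhat with rfl | hxhat
      · linarith [hmin ![1, 0] (by simp)]
      · exact hxhat
    exact ⟨hxhat, hg_unit hxhat⟩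
  · rcases hx with rfl | hx
    · rw [hg_zero]
    · rw [hg_unit hx]
      exact zero_le_one

/-- Two-stage example: solving with respect to a strict convex combination
`chat = λ(M,0) + (1-λ)(0,M)` of the two scenarios yields, whenever
`M · min(λ, 1-λ) > 1`, only the first-stage solutions `(1,0)` or `(0,1)`, each with
true robust value `g_U = 1`, while the optimal robust value `min_{x ∈ X'} g_U(x)` is `0`
(so the midpoint approach gives no finite approximation guarantee). -/
theorem stmt_15 (lam M : ℝ) (hlam0 : 0 < lam) (hlam1 : lam < 1) (hM : 0 < M)
    (hMbig : 1 < M * min lam (1 - lam))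
    (X : Set ((Fin 2 → ℝ) × (Fin 2 → ℝ)))
    (hX : X = {p | (∀ j, p.1 j = 0 ∨ p.1 j = 1) ∧ (∀ j, p.2 j = 0 ∨ p.2 j = 1) ∧
      p.1 0 + p.1 1 + p.2 0 + p.2 1 = 1})
    (c : Fin 2 → Fin 2 → ℝ) (hc0 : c 0 = ![M, 0]) (hc1 : c 1 = ![0, M])
    (chat : Fin 2 → ℝ) (hchat : chat = ![lam * M, (1 - lam) * M])
    (f : (Fin 2 → ℝ) → ℝ)
    (hf : ∀ x, f x = (1 * x 0 + 1 * x 1) +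
      sInf ((fun y => ∑ j, chat j * y j) '' {y | (x, y) ∈ X}))
    (g : (Fin 2 → ℝ) → ℝ)
    (hg : ∀ x, g x = (1 * x 0 + 1 * x 1) +
      (Finset.univ.sup' Finset.univ_nonempty fun i =>
        sInf ((fun y => ∑ j, c i j * y j) '' {y | (x, y) ∈ X}))) :
    (∀ xhat ∈ {x : Fin 2 → ℝ | ∃ y, (x, y) ∈ X},
      (∀ x ∈ {x : Fin 2 → ℝ | ∃ y, (x, y) ∈ X}, f xhat ≤ f x) →
        (xhat = ![1, 0] ∨ xhat = ![0, 1]) ∧ g xhat = 1) ∧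
    (∃ x ∈ {x : Fin 2 → ℝ | ∃ y, (x, y) ∈ X}, g x = 0) ∧
    (∀ x ∈ {x : Fin 2 → ℝ | ∃ y, (x, y) ∈ X}, 0 ≤ g x) :=
  stmt_15_general lam M hM hMbig X hX c hc0 hc1 chat hchat f hf g hg
end
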